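/- arXiv:1701.03899 — 2 statements merged into one kernel-verified Lean document; each statement's English description precedes it below -/
import Mathlib

section
/- Suppose e1 is a unit vector at which f attains its maximum over the unit sphere of V with λ1 := f(e1) > 0, that K(e1, v) = (λ1/2)·v for every v orthogonal to e1, and that λ1² = 4ε (so ε = 1 and λ1 = 2). Then K(e1,e1) = 2e1, K(e1,v) = v for all v ⟂ e1, and K(v,w) = ⟨v,w⟩·e1 for all v, w ⟂ e1; equivalently, there is an orthonormal basis {e1, …, en} of V with K(e1,e1) = 2e1, K(e1,ei) = ei and K(ei,ej) = δ_{ij}·e1 for 2 ≤ i, j ≤ n. -/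
open scoped RealInnerProductSpace
open Module Submodule

noncomputable section

variable {V : Type*} [NormedAddCommGroup V] [InnerProductSpace ℝ V]

/-- The curvature-type operator built from `ε` and the difference tensor `K`:
`R(X,Y)Z = ε(⟨Y,Z⟩X − ⟨X,Z⟩Y) − K(X,K(Y,Z)) + K(Y,K(X,Z))`. -/
def Rc (ε : ℝ) (K : V →ₗ[ℝ] V →ₗ[ℝ] V) (X Y Z : V) : V :=
  ε • (⟪Y, Z⟫ • X - ⟪X, Z⟫ • Y) - K X (K Y Z) + K Y (K X Z)

/-! `K(e₁, v) = (λ₁/2) v` for `v ⟂ e₁` says that the second variation of `f` at its maximum `e₁`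
vanishes in every direction `v ⟂ e₁`. Maximality then forces the third variation, which is `f(v)`,
to vanish as well: along `e₁ + t v` one gets `f(v) t³ ≤ C t⁴` for all real `t`. So the cubic form
vanishes on the diagonal of `e₁ᗮ`, hence on all of `e₁ᗮ` by polarization, and `K` is read off from
its remaining components `⟨K(e₁, ·), ·⟩`. -/

theorem eq_zero_of_forall_mul_pow_three_le {a C : ℝ} (h : ∀ t : ℝ, a * t ^ 3 ≤ C * t ^ 4) :
    a = 0 := by
  set D := |C| + 1
  have hD : 0 < D := by positivity
  have hle := h (a / (2 * D))
  have hC : C * (a / (2 * D)) ^ 4 ≤ D * (a / (2 * D)) ^ 4 :=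
    mul_le_mul_of_nonneg_right ((le_abs_self C).trans (by linarith)) (by positivity)
  have ha4 : a ^ 4 / (16 * D ^ 3) ≤ 0 := by
    have key : a * (a / (2 * D)) ^ 3 - D * (a / (2 * D)) ^ 4 = a ^ 4 / (16 * D ^ 3) := by
      field_simp; ring
    linarith
  have : a ^ 4 ≤ 0 := by simpa using (div_le_iff₀ (by positivity)).1 ha4
  exact pow_eq_zero_iff (n := 4) (by norm_num) |>.1 (le_antisymm this (by positivity))

theorem eq_inner_smul_of_forall_inner_eq_zero {e x : V} (he : ‖e‖ = 1)
    (h : ∀ u : V, ⟪e, u⟫ = 0 → ⟪x, u⟫ = 0) : x = ⟪e, x⟫ • e := by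
  have hee : ⟪e, e⟫ = 1 := by rw [real_inner_self_eq_norm_sq, he, one_pow]
  have horth : ⟪e, x - ⟪e, x⟫ • e⟫ = 0 := by
    rw [inner_sub_right, real_inner_smul_right, hee, mul_one, sub_self]
  have hzero : ⟪x - ⟪e, x⟫ • e, x - ⟪e, x⟫ • e⟫ = 0 := by
    rw [inner_sub_left, h _ horth, real_inner_smul_left, horth, mul_zero, sub_zero]
  exact sub_eq_zero.1 (inner_self_eq_zero.1 hzero)

section CubicForm

variable {K : V →ₗ[ℝ] V →ₗ[ℝ] V}

theorem inner_apply_add_smul_cube (hKsymm : ∀ X Y : V, K X Y = K Y X)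
    (hKcub : ∀ X Y Z : V, ⟪K X Y, Z⟫ = ⟪K X Z, Y⟫) (x y : V) (t : ℝ) :
    ⟪K (x + t • y) (x + t • y), x + t • y⟫ =
      ⟪K x x, x⟫ + 3 * t * ⟪K x x, y⟫ + 3 * t ^ 2 * ⟪K y y, x⟫ + t ^ 3 * ⟪K y y, y⟫ := by
  have hxy : ⟪K x y, x⟫ = ⟪K x x, y⟫ := hKcub x y x
  have hyx : ⟪K x y, y⟫ = ⟪K y y, x⟫ := by rw [hKsymm]; exact hKcub y x y
  simp only [map_add, map_smul, LinearMap.add_apply, LinearMap.smul_apply, inner_add_left,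
    inner_add_right, real_inner_smul_left, real_inner_smul_right, hKsymm y x, hxy, hyx]
  ring

theorem inner_apply_le_mul_norm_pow_three {lam : ℝ}
    (hmax : ∀ u : V, ‖u‖ = 1 → ⟪K u u, u⟫ ≤ lam) (x : V) :
    ⟪K x x, x⟫ ≤ lam * ‖x‖ ^ 3 := by
  rcases eq_or_ne x 0 with rfl | hx
  · simp
  have hnx : ‖x‖ ≠ 0 := norm_ne_zero_iff.2 hx
  have hunit := hmax (‖x‖⁻¹ • x) (norm_smul_inv_norm hx)
  have hscale : ⟪K x x, x⟫ = ‖x‖ ^ 3 * ⟪K (‖x‖⁻¹ • x) (‖x‖⁻¹ • x), ‖x‖⁻¹ • x⟫ := by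
    simp only [map_smul, LinearMap.smul_apply, real_inner_smul_left, real_inner_smul_right]
    field_simp
  rw [hscale, mul_comm lam]
  exact mul_le_mul_of_nonneg_left hunit (by positivity)

theorem inner_apply_eq_zero_of_forall_inner_apply_self_eq_zero
    (hKsymm : ∀ X Y : V, K X Y = K Y X) (hKcub : ∀ X Y Z : V, ⟪K X Y, Z⟫ = ⟪K X Z, Y⟫)
    {W : Submodule ℝ V} (hW : ∀ v ∈ W, ⟪K v v, v⟫ = 0) {v w u : V}
    (hv : v ∈ W) (hw : w ∈ W) (hu : u ∈ W) : ⟪K v w, u⟫ = 0 := by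
  have hvvu : ∀ v ∈ W, ∀ u ∈ W, ⟪K v v, u⟫ = 0 := by
    intro v hv u hu
    have hplus := inner_apply_add_smul_cube hKsymm hKcub v u 1
    have hminus := inner_apply_add_smul_cube hKsymm hKcub v u (-1)
    rw [hW _ (W.add_mem hv (W.smul_mem _ hu)), hW v hv, hW u hu] at hplus hminus
    linarith
  have hsum := hvvu (v + w) (W.add_mem hv hw) u hu
  simp only [map_add, LinearMap.add_apply, inner_add_left, hvvu v hv u hu, hvvu w hw u hu,
    hKsymm w v] at hsum
  linarith

variable {e : V} {lam : ℝ}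

theorem nonneg_of_forall_inner_apply_le (he : ‖e‖ = 1) (hlam : lam = ⟪K e e, e⟫)
    (hmax : ∀ u : V, ‖u‖ = 1 → ⟪K u u, u⟫ ≤ lam) : 0 ≤ lam := by
  have hneg := hmax (-e) (by rw [norm_neg, he])
  simp only [map_neg, LinearMap.neg_apply, neg_neg, inner_neg_right] at hneg
  linarith

theorem apply_self_eq_smul_of_apply_eq_half_smul (hKcub : ∀ X Y Z : V, ⟪K X Y, Z⟫ = ⟪K X Z, Y⟫)
    (he : ‖e‖ = 1) (hlam : lam = ⟪K e e, e⟫)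
    (heig : ∀ v : V, ⟪e, v⟫ = 0 → K e v = (lam / 2) • v) : K e e = lam • e := by
  have h := eq_inner_smul_of_forall_inner_eq_zero (x := K e e) he fun u hu => by
    rw [hKcub, heig u hu, real_inner_smul_left, real_inner_comm, hu, mul_zero]
  rwa [real_inner_comm, ← hlam] at h

theorem inner_apply_self_eq_zero_of_isMax (hKsymm : ∀ X Y : V, K X Y = K Y X)
    (hKcub : ∀ X Y Z : V, ⟪K X Y, Z⟫ = ⟪K X Z, Y⟫) (he : ‖e‖ = 1) (hlam : lam = ⟪K e e, e⟫)
    (hmax : ∀ u : V, ‖u‖ = 1 → ⟪K u u, u⟫ ≤ lam)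
    (heig : ∀ v : V, ⟪e, v⟫ = 0 → K e v = (lam / 2) • v) {v : V} (hv : ⟪e, v⟫ = 0) :
    ⟪K v v, v⟫ = 0 := by
  have hlam0 := nonneg_of_forall_inner_apply_le he hlam hmax
  have heev : ⟪K e e, v⟫ = 0 := by
    rw [hKcub, heig v hv, real_inner_smul_left, real_inner_comm, hv, mul_zero]
  have hvve : ⟪K v v, e⟫ = lam / 2 * ‖v‖ ^ 2 := by
    rw [hKcub, hKsymm, heig v hv, real_inner_smul_left, real_inner_self_eq_norm_sq]
  refine eq_zero_of_forall_mul_pow_three_le (C := lam * ‖v‖ ^ 4 / 2) fun t => ?_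
  have hsq : ‖e + t • v‖ ^ 2 = 1 + t ^ 2 * ‖v‖ ^ 2 := by
    rw [norm_add_sq_real, real_inner_smul_right, hv, norm_smul, he, Real.norm_eq_abs, mul_pow,
      sq_abs]
    ring
  -- `‖x‖ ≤ (‖x‖² + 1) / 2`, multiplied by `‖x‖²`
  have hcube : ‖e + t • v‖ ^ 3 ≤ (1 + t ^ 2 * ‖v‖ ^ 2) * (1 + t ^ 2 * ‖v‖ ^ 2 / 2) := by
    rw [← hsq]
    nlinarith [mul_nonneg (sq_nonneg ‖e + t • v‖) (sq_nonneg (‖e + t • v‖ - 1))]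
  have hle := inner_apply_le_mul_norm_pow_three hmax (e + t • v)
  rw [inner_apply_add_smul_cube hKsymm hKcub, heev, hvve, ← hlam] at hle
  nlinarith [mul_le_mul_of_nonneg_left hcube hlam0]

theorem apply_eq_inner_smul_of_isMax (hKsymm : ∀ X Y : V, K X Y = K Y X)
    (hKcub : ∀ X Y Z : V, ⟪K X Y, Z⟫ = ⟪K X Z, Y⟫) (he : ‖e‖ = 1) (hlam : lam = ⟪K e e, e⟫)
    (hmax : ∀ u : V, ‖u‖ = 1 → ⟪K u u, u⟫ ≤ lam)
    (heig : ∀ v : V, ⟪e, v⟫ = 0 → K e v = (lam / 2) • v) {v w : V} (hv : ⟪e, v⟫ = 0)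
    (hw : ⟪e, w⟫ = 0) : K v w = (lam / 2 * ⟪v, w⟫) • e := by
  have hdiag : ∀ x ∈ (ℝ ∙ e)ᗮ, ⟪K x x, x⟫ = 0 := fun x hx =>
    inner_apply_self_eq_zero_of_isMax hKsymm hKcub he hlam hmax heig
      (mem_orthogonal_singleton_iff_inner_right.1 hx)
  have h := eq_inner_smul_of_forall_inner_eq_zero (x := K v w) he fun u hu =>
    inner_apply_eq_zero_of_forall_inner_apply_self_eq_zero hKsymm hKcub hdiag
      (mem_orthogonal_singleton_iff_inner_right.2 hv)
      (mem_orthogonal_singleton_iff_inner_right.2 hw)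
      (mem_orthogonal_singleton_iff_inner_right.2 hu)
  rwa [real_inner_comm, hKcub, hKsymm v e, heig v hv, real_inner_smul_left] at h

end CubicForm

theorem stmt_2_general {V : Type*} [NormedAddCommGroup V] [InnerProductSpace ℝ V]
    (ε : ℝ) (hε : ε = 1 ∨ ε = -1)
    (K : V →ₗ[ℝ] V →ₗ[ℝ] V)
    (hKsymm : ∀ X Y : V, K X Y = K Y X)
    (hKcub : ∀ X Y Z : V, ⟪K X Y, Z⟫ = ⟪K X Z, Y⟫)
    (e1 : V) (he1 : ‖e1‖ = 1)
    (lam1 : ℝ) (hlam1 : lam1 = ⟪K e1 e1, e1⟫)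
    (hmax : ∀ u : V, ‖u‖ = 1 → ⟪K u u, u⟫ ≤ lam1)
    (heig : ∀ v : V, ⟪e1, v⟫ = 0 → K e1 v = (lam1 / 2) • v)
    (hsq : lam1 ^ 2 = 4 * ε) :
    K e1 e1 = (2 : ℝ) • e1 ∧
    (∀ v : V, ⟪e1, v⟫ = 0 → K e1 v = v) ∧
    (∀ v w : V, ⟪e1, v⟫ = 0 → ⟪e1, w⟫ = 0 → K v w = ⟪v, w⟫ • e1) := by
  have hlam0 := nonneg_of_forall_inner_apply_le he1 hlam1 hmax
  have hlam2 : lam1 = 2 := by rcases hε with rfl | rfl <;> nlinarith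
  refine ⟨hlam2 ▸ apply_self_eq_smul_of_apply_eq_half_smul hKcub he1 hlam1 heig,
    fun v hv => ?_, fun v w hv hw => ?_⟩
  · rw [heig v hv, hlam2, div_self two_ne_zero, one_smul]
  · rw [apply_eq_inner_smul_of_isMax hKsymm hKcub he1 hlam1 hmax heig hv hw, hlam2,
      div_self two_ne_zero, one_mul]

/-- Lemma 5.1: in Case `B` (`λ₁² = 4ε`), the difference tensor has the form
`K(e₁,e₁) = 2e₁`, `K(e₁,v) = v` and `K(v,w) = ⟨v,w⟩e₁` for `v, w ⟂ e₁`. -/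
theorem stmt_2 {V : Type*} [NormedAddCommGroup V] [InnerProductSpace ℝ V]
    (n : ℕ) (hn : finrank ℝ V = n) (hn2 : 2 ≤ n)
    (ε : ℝ) (hε : ε = 1 ∨ ε = -1)
    (K : V →ₗ[ℝ] V →ₗ[ℝ] V)
    (hKsymm : ∀ X Y : V, K X Y = K Y X)
    (hKcub : ∀ X Y Z : V, ⟪K X Y, Z⟫ = ⟪K X Z, Y⟫)
    (hpar : ∀ X Y Z U : V,
      Rc ε K X Y (K Z U) = K (Rc ε K X Y Z) U + K Z (Rc ε K X Y U))
    (e1 : V) (he1 : ‖e1‖ = 1)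
    (lam1 : ℝ) (hlam1 : lam1 = ⟪K e1 e1, e1⟫) (hlam1pos : 0 < lam1)
    (hmax : ∀ u : V, ‖u‖ = 1 → ⟪K u u, u⟫ ≤ lam1)
    (heig : ∀ v : V, ⟪e1, v⟫ = 0 → K e1 v = (lam1 / 2) • v)
    (hsq : lam1 ^ 2 = 4 * ε) :
    K e1 e1 = (2 : ℝ) • e1 ∧
    (∀ v : V, ⟪e1, v⟫ = 0 → K e1 v = v) ∧
    (∀ v w : V, ⟪e1, v⟫ = 0 → ⟪e1, w⟫ = 0 → K v w = ⟪v, w⟫ • e1) :=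
  stmt_2_general ε hε K hKsymm hKcub e1 he1 lam1 hlam1 hmax heig hsq

end
end

section
/- The bilinear map L is isotropic: ⟨L(v,v),L(v,v)⟩ = (1/2)λ1η·⟨v,v⟩² for all v ∈ D2. More precisely, for all v1, v2, v3 ∈ D2 one has K(L(v1,v2),v3) + K(L(v1,v3),v2) + K(L(v2,v3),v1) = (1/2)λ1η·(⟨v1,v2⟩v3 + ⟨v1,v3⟩v2 + ⟨v2,v3⟩v1), and consequently for all v1, v2, v3, v4 ∈ D2: ⟨L(v1,v2),L(v3,v4)⟩ + ⟨L(v1,v3),L(v2,v4)⟩ + ⟨L(v1,v4),L(v2,v3)⟩ = (1/2)λ1η·(⟨v1,v2⟩⟨v3,v4⟩ + ⟨v1,v3⟩⟨v2,v4⟩ + ⟨v1,v4⟩⟨v2,v3⟩). -/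
open scoped RealInnerProductSpace
open Module Submodule

noncomputable section

variable {V : Type*} [NormedAddCommGroup V] [InnerProductSpace ℝ V]

/-- The bilinear map `L(v₁,v₂) = K(v₁,v₂) − (λ₁/2)⟨v₁,v₂⟩ e₁`. -/
def Lop (lam1 : ℝ) (e1 : V) (K : V →ₗ[ℝ] V →ₗ[ℝ] V) (v1 v2 : V) : V :=
  K v1 v2 - (lam1 / 2 * ⟪v1, v2⟫) • e1

/-- The distribution `D₂ = {v : v ⟂ e₁, K(e₁,v) = (λ₁/2)v}`. -/
def D2s (lam1 : ℝ) (e1 : V) (K : V →ₗ[ℝ] V →ₗ[ℝ] V) : Submodule ℝ V :=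
  (ℝ ∙ e1)ᗮ ⊓ Module.End.eigenspace (K e1) (lam1 / 2)

/-- The distribution `D₃ = {w : w ⟂ e₁, K(e₁,w) = μw}`. -/
def D3s (mu : ℝ) (e1 : V) (K : V →ₗ[ℝ] V →ₗ[ℝ] V) : Submodule ℝ V :=
  (ℝ ∙ e1)ᗮ ⊓ Module.End.eigenspace (K e1) mu

/-- The operator `P_v(ṽ) = K(v, L(v,ṽ))`, as a linear endomorphism of `V`. -/
def Pop (lam1 : ℝ) (e1 : V) (K : V →ₗ[ℝ] V →ₗ[ℝ] V) (v : V) : V →ₗ[ℝ] V :=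
  (K v) ∘ₗ (K v - (lam1 / 2) •
    ((LinearMap.toSpanSingleton ℝ V e1) ∘ₗ (innerSL ℝ v).toLinearMap))

/-- The eigenspace `V_v(c)` of `P_v` within the orthogonal complement of `v` in `D₂`. -/
def Vvs (lam1 c : ℝ) (e1 : V) (K : V →ₗ[ℝ] V →ₗ[ℝ] V) (v : V) : Submodule ℝ V :=
  D2s lam1 e1 K ⊓ (ℝ ∙ v)ᗮ ⊓ Module.End.eigenspace (Pop lam1 e1 K v) c

/-! Apply the parallelism identity with `X = e₁` and `Y = v₁ ∈ D₂`. Since `K(e₁, ·)` acts by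
`λ₁` on `e₁`, by `λ₁/2` on `D₂` and by `μ` on `D₃`, and `K(e₁,e₁) = λ₁e₁` because the three
pieces span `V`, both sides collapse to the cyclic sum of `K(L(vᵢ,vⱼ),v_k)` and the symmetrised
sum of `⟨vᵢ,vⱼ⟩v_k`, with coefficients `λ₁/2 - μ = η` and `(λ₁/2)(λ₁²/4 - ε) = (λ₁/2)η²`.
Dividing by `η` gives the cubic identity. Pairing it with `v₄`, and using that `L` takes values
orthogonal to `e₁`, gives the quartic one, whose diagonal is the isotropy of `L`. -/

section

variable {K : V →ₗ[ℝ] V →ₗ[ℝ] V} {e1 : V} {lam1 μ ε : ℝ}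

-- `D2s lam1 e1 K` is `D3s (lam1 / 2) e1 K` by definition, so lemmas on `D3s c` cover both.
theorem mem_D3s_iff {c : ℝ} {w : V} : w ∈ D3s c e1 K ↔ ⟪e1, w⟫ = 0 ∧ K e1 w = c • w := by
  rw [D3s, mem_inf, mem_orthogonal_singleton_iff_inner_right, Module.End.mem_eigenspace_iff]

theorem mem_D2s_iff {v : V} :
    v ∈ D2s lam1 e1 K ↔ ⟪e1, v⟫ = 0 ∧ K e1 v = (lam1 / 2) • v :=
  mem_D3s_iff

theorem inner_eq_zero_of_mem_D3s (hKcub : ∀ X Y Z : V, ⟪K X Y, Z⟫ = ⟪K X Z, Y⟫)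
    {c c' : ℝ} (hcc' : c ≠ c') {v w : V} (hv : v ∈ D3s c e1 K) (hw : w ∈ D3s c' e1 K) :
    ⟪v, w⟫ = 0 := by
  have h : c * ⟪v, w⟫ = c' * ⟪v, w⟫ :=
    calc c * ⟪v, w⟫ = ⟪K e1 v, w⟫ := by rw [(mem_D3s_iff.1 hv).2, real_inner_smul_left]
      _ = ⟪K e1 w, v⟫ := hKcub e1 v w
      _ = c' * ⟪v, w⟫ := by rw [(mem_D3s_iff.1 hw).2, real_inner_smul_left, real_inner_comm]
  have h' : (c - c') * ⟪v, w⟫ = 0 := by linear_combination h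
  exact (mul_eq_zero.1 h').resolve_left (sub_ne_zero.2 hcc')

theorem apply_self_eq_smul_of_sup_eq_top (hKcub : ∀ X Y Z : V, ⟪K X Y, Z⟫ = ⟪K X Z, Y⟫) (he1 : ‖e1‖ = 1)
    (hlam1 : lam1 = ⟪K e1 e1, e1⟫) {c c' : ℝ}
    (hsplit : (ℝ ∙ e1) ⊔ D3s c e1 K ⊔ D3s c' e1 K = ⊤) : K e1 e1 = lam1 • e1 := by
  have hD3 (c'' : ℝ) : K e1 e1 - lam1 • e1 ∈ (D3s c'' e1 K)ᗮ := by
    intro w hw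
    obtain ⟨hw1, hw2⟩ := mem_D3s_iff.1 hw
    rw [inner_sub_right, real_inner_smul_right, real_inner_comm, hKcub, hw2,
      real_inner_smul_left, real_inner_comm, hw1]
    ring
  have he : K e1 e1 - lam1 • e1 ∈ (ℝ ∙ e1)ᗮ := by
    rw [mem_orthogonal_singleton_iff_inner_right, inner_sub_right, real_inner_smul_right,
      real_inner_comm, ← hlam1, real_inner_self_eq_norm_sq, he1]
    ring
  have htop : K e1 e1 - lam1 • e1 ∈ (⊤ : Submodule ℝ V)ᗮ := by
    rw [← hsplit, ← inf_orthogonal, ← inf_orthogonal]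
    exact ⟨⟨he, hD3 c⟩, hD3 c'⟩
  rwa [top_orthogonal_eq_bot, mem_bot, sub_eq_zero] at htop

theorem apply_eq_Lop_add (v1 v2 : V) :
    K v1 v2 = Lop lam1 e1 K v1 v2 + (lam1 / 2 * ⟪v1, v2⟫) • e1 :=
  (sub_add_cancel _ _).symm

theorem Rc_e1_apply_of_mem_D2s (hK11 : K e1 e1 = lam1 • e1) {v1 v2 : V}
    (hv2 : v2 ∈ D2s lam1 e1 K) (hL : Lop lam1 e1 K v1 v2 ∈ D3s μ e1 K) :
    Rc ε K e1 v1 v2 =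
      (lam1 / 2 - μ) • Lop lam1 e1 K v1 v2 + ((ε - lam1 ^ 2 / 4) * ⟪v1, v2⟫) • e1 := by
  obtain ⟨hp2, he2⟩ := mem_D2s_iff.1 hv2
  rw [Rc, hp2, he2, map_smul, apply_eq_Lop_add (lam1 := lam1) (e1 := e1) v1 v2]
  simp only [map_add, map_smul, (mem_D3s_iff.1 hL).2, hK11]
  module

theorem Rc_e1_apply_K (hKsymm : ∀ X Y : V, K X Y = K Y X)
    (hKcub : ∀ X Y Z : V, ⟪K X Y, Z⟫ = ⟪K X Z, Y⟫) (he1 : ‖e1‖ = 1)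
    (hK11 : K e1 e1 = lam1 • e1) (hμ : μ ≠ lam1 / 2) {v1 v2 v3 : V}
    (hv1 : v1 ∈ D2s lam1 e1 K) (hL : Lop lam1 e1 K v2 v3 ∈ D3s μ e1 K)
    (hKL : K v1 (Lop lam1 e1 K v2 v3) ∈ D2s lam1 e1 K) :
    Rc ε K e1 v1 (K v2 v3) = (μ - lam1 / 2) • K v1 (Lop lam1 e1 K v2 v3) +
      (lam1 / 2 * (lam1 ^ 2 / 4 - ε) * ⟪v2, v3⟫) • v1 := by
  obtain ⟨hp1, hev1⟩ := mem_D2s_iff.1 hv1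
  obtain ⟨hpL, heL⟩ := mem_D3s_iff.1 hL
  have hv1L : ⟪v1, Lop lam1 e1 K v2 v3⟫ = 0 := inner_eq_zero_of_mem_D3s hKcub hμ.symm hv1 hL
  have hee : ⟪e1, e1⟫ = 1 := by rw [real_inner_self_eq_norm_sq, he1, one_pow]
  rw [Rc, apply_eq_Lop_add (lam1 := lam1) (e1 := e1) v2 v3]
  simp only [map_add, map_smul, inner_add_right, real_inner_smul_right,
    hv1L, hpL, real_inner_comm e1 v1, hp1, hee, hKsymm v1 e1, hev1, heL, hK11,
    (mem_D2s_iff.1 hKL).2]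
  module

theorem smul_sum_K_Lop_cyclic (hKsymm : ∀ X Y : V, K X Y = K Y X)
    (hKcub : ∀ X Y Z : V, ⟪K X Y, Z⟫ = ⟪K X Z, Y⟫)
    (hpar : ∀ X Y Z U : V, Rc ε K X Y (K Z U) = K (Rc ε K X Y Z) U + K Z (Rc ε K X Y U))
    (he1 : ‖e1‖ = 1) (hK11 : K e1 e1 = lam1 • e1) (hμ : μ ≠ lam1 / 2)
    (hLD3 : ∀ v1 ∈ D2s lam1 e1 K, ∀ v2 ∈ D2s lam1 e1 K, Lop lam1 e1 K v1 v2 ∈ D3s μ e1 K)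
    (hKD2 : ∀ v ∈ D2s lam1 e1 K, ∀ w ∈ D3s μ e1 K, K v w ∈ D2s lam1 e1 K)
    {v1 v2 v3 : V} (hv1 : v1 ∈ D2s lam1 e1 K) (hv2 : v2 ∈ D2s lam1 e1 K)
    (hv3 : v3 ∈ D2s lam1 e1 K) :
    (lam1 / 2 - μ) • (K (Lop lam1 e1 K v1 v2) v3 + K (Lop lam1 e1 K v1 v3) v2 +
        K (Lop lam1 e1 K v2 v3) v1) =
      (lam1 / 2 * (lam1 ^ 2 / 4 - ε)) • (⟪v1, v2⟫ • v3 + ⟪v1, v3⟫ • v2 + ⟪v2, v3⟫ • v1) := by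
  have h := hpar e1 v1 v2 v3
  rw [Rc_e1_apply_K hKsymm hKcub he1 hK11 hμ hv1 (hLD3 v2 hv2 v3 hv3)
      (hKD2 v1 hv1 _ (hLD3 v2 hv2 v3 hv3)),
    Rc_e1_apply_of_mem_D2s hK11 hv2 (hLD3 v1 hv1 v2 hv2),
    Rc_e1_apply_of_mem_D2s hK11 hv3 (hLD3 v1 hv1 v3 hv3)] at h
  simp only [map_add, map_smul, LinearMap.add_apply, LinearMap.smul_apply,
    hKsymm v2 e1, (mem_D2s_iff.1 hv2).2, (mem_D2s_iff.1 hv3).2,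
    hKsymm v2 (Lop lam1 e1 K v1 v3), hKsymm v1 (Lop lam1 e1 K v2 v3)] at h
  linear_combination (norm := module) -h

theorem sum_K_Lop_cyclic {η : ℝ} (hKsymm : ∀ X Y : V, K X Y = K Y X)
    (hKcub : ∀ X Y Z : V, ⟪K X Y, Z⟫ = ⟪K X Z, Y⟫)
    (hpar : ∀ X Y Z U : V, Rc ε K X Y (K Z U) = K (Rc ε K X Y Z) U + K Z (Rc ε K X Y U))
    (he1 : ‖e1‖ = 1) (hK11 : K e1 e1 = lam1 • e1)
    (hμη : μ = lam1 / 2 - η) (hη2 : η ^ 2 = lam1 ^ 2 / 4 - ε) (hη : η ≠ 0)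
    (hLD3 : ∀ v1 ∈ D2s lam1 e1 K, ∀ v2 ∈ D2s lam1 e1 K, Lop lam1 e1 K v1 v2 ∈ D3s μ e1 K)
    (hKD2 : ∀ v ∈ D2s lam1 e1 K, ∀ w ∈ D3s μ e1 K, K v w ∈ D2s lam1 e1 K)
    {v1 v2 v3 : V} (hv1 : v1 ∈ D2s lam1 e1 K) (hv2 : v2 ∈ D2s lam1 e1 K)
    (hv3 : v3 ∈ D2s lam1 e1 K) :
    K (Lop lam1 e1 K v1 v2) v3 + K (Lop lam1 e1 K v1 v3) v2 + K (Lop lam1 e1 K v2 v3) v1 =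
      (lam1 * η / 2) • (⟪v1, v2⟫ • v3 + ⟪v1, v3⟫ • v2 + ⟪v2, v3⟫ • v1) := by
  have hμ : μ ≠ lam1 / 2 := by rw [hμη]; simpa using hη
  have h := smul_sum_K_Lop_cyclic hKsymm hKcub hpar he1 hK11 hμ hLD3 hKD2 hv1 hv2 hv3
  rw [hμη, sub_sub_cancel, ← hη2] at h
  refine smul_right_injective V hη ?_
  simp only [h, smul_smul]
  congr 1
  ring

theorem inner_K_Lop_eq_inner_Lop (hKsymm : ∀ X Y : V, K X Y = K Y X)
    (hKcub : ∀ X Y Z : V, ⟪K X Y, Z⟫ = ⟪K X Z, Y⟫) {v1 v2 v3 v4 : V}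
    (hL : ⟪e1, Lop lam1 e1 K v1 v2⟫ = 0) :
    ⟪K (Lop lam1 e1 K v1 v2) v3, v4⟫ = ⟪Lop lam1 e1 K v1 v2, Lop lam1 e1 K v3 v4⟫ := by
  rw [hKsymm, hKcub, real_inner_comm, apply_eq_Lop_add (lam1 := lam1) (e1 := e1) v3 v4,
    inner_add_right, real_inner_smul_right, real_inner_comm e1, hL, mul_zero, add_zero]

theorem sum_inner_Lop_of_sum_K_Lop (hKsymm : ∀ X Y : V, K X Y = K Y X)
    (hKcub : ∀ X Y Z : V, ⟪K X Y, Z⟫ = ⟪K X Z, Y⟫)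
    (hLD3 : ∀ v1 ∈ D2s lam1 e1 K, ∀ v2 ∈ D2s lam1 e1 K, Lop lam1 e1 K v1 v2 ∈ D3s μ e1 K)
    {k : ℝ} {v1 v2 v3 v4 : V} (hv1 : v1 ∈ D2s lam1 e1 K) (hv2 : v2 ∈ D2s lam1 e1 K)
    (hv3 : v3 ∈ D2s lam1 e1 K)
    (hcyc : K (Lop lam1 e1 K v1 v2) v3 + K (Lop lam1 e1 K v1 v3) v2 +
        K (Lop lam1 e1 K v2 v3) v1 = k • (⟪v1, v2⟫ • v3 + ⟪v1, v3⟫ • v2 + ⟪v2, v3⟫ • v1)) :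
    ⟪Lop lam1 e1 K v1 v2, Lop lam1 e1 K v3 v4⟫ + ⟪Lop lam1 e1 K v1 v3, Lop lam1 e1 K v2 v4⟫ +
        ⟪Lop lam1 e1 K v1 v4, Lop lam1 e1 K v2 v3⟫ =
      k * (⟪v1, v2⟫ * ⟪v3, v4⟫ + ⟪v1, v3⟫ * ⟪v2, v4⟫ + ⟪v1, v4⟫ * ⟪v2, v3⟫) := by
  have hL {a b : V} (ha : a ∈ D2s lam1 e1 K) (hb : b ∈ D2s lam1 e1 K) :
      ⟪e1, Lop lam1 e1 K a b⟫ = 0 :=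
    (mem_D3s_iff.1 (hLD3 a ha b hb)).1
  have h := congrArg (⟪·, v4⟫) hcyc
  simp only [inner_add_left, real_inner_smul_left,
    inner_K_Lop_eq_inner_Lop hKsymm hKcub (hL hv1 hv2),
    inner_K_Lop_eq_inner_Lop hKsymm hKcub (hL hv1 hv3),
    inner_K_Lop_eq_inner_Lop hKsymm hKcub (hL hv2 hv3)] at h
  rw [real_inner_comm (Lop lam1 e1 K v2 v3)]
  linear_combination h

end

theorem stmt_5_general {V : Type*} [NormedAddCommGroup V] [InnerProductSpace ℝ V]
    (ε : ℝ)
    (K : V →ₗ[ℝ] V →ₗ[ℝ] V)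
    (hKsymm : ∀ X Y : V, K X Y = K Y X)
    (hKcub : ∀ X Y Z : V, ⟪K X Y, Z⟫ = ⟪K X Z, Y⟫)
    (hpar : ∀ X Y Z U : V,
      Rc ε K X Y (K Z U) = K (Rc ε K X Y Z) U + K Z (Rc ε K X Y U))
    (e1 : V) (he1 : ‖e1‖ = 1)
    (lam1 η μ : ℝ)
    (hlam1 : lam1 = ⟪K e1 e1, e1⟫)
    (hdisc : 0 < lam1 ^ 2 - 4 * ε)
    (hη : η = Real.sqrt (lam1 ^ 2 - 4 * ε) / 2)
    (hμ : μ = (lam1 - Real.sqrt (lam1 ^ 2 - 4 * ε)) / 2)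
    (hsplit : (ℝ ∙ e1) ⊔ D2s lam1 e1 K ⊔ D3s μ e1 K = ⊤)
    (hLD3 : ∀ v1 ∈ D2s lam1 e1 K, ∀ v2 ∈ D2s lam1 e1 K,
      Lop lam1 e1 K v1 v2 ∈ D3s μ e1 K)
    (hKD2 : ∀ v ∈ D2s lam1 e1 K, ∀ w ∈ D3s μ e1 K, K v w ∈ D2s lam1 e1 K)
    :
    (∀ v ∈ D2s lam1 e1 K,
        ⟪Lop lam1 e1 K v v, Lop lam1 e1 K v v⟫ = lam1 * η / 2 * ⟪v, v⟫ ^ 2) ∧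
    (∀ v1 ∈ D2s lam1 e1 K, ∀ v2 ∈ D2s lam1 e1 K, ∀ v3 ∈ D2s lam1 e1 K,
        K (Lop lam1 e1 K v1 v2) v3 + K (Lop lam1 e1 K v1 v3) v2 +
            K (Lop lam1 e1 K v2 v3) v1 =
          (lam1 * η / 2) • (⟪v1, v2⟫ • v3 + ⟪v1, v3⟫ • v2 + ⟪v2, v3⟫ • v1)) ∧
    (∀ v1 ∈ D2s lam1 e1 K, ∀ v2 ∈ D2s lam1 e1 K, ∀ v3 ∈ D2s lam1 e1 K,
      ∀ v4 ∈ D2s lam1 e1 K,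
        ⟪Lop lam1 e1 K v1 v2, Lop lam1 e1 K v3 v4⟫ +
            ⟪Lop lam1 e1 K v1 v3, Lop lam1 e1 K v2 v4⟫ +
            ⟪Lop lam1 e1 K v1 v4, Lop lam1 e1 K v2 v3⟫ =
          lam1 * η / 2 * (⟪v1, v2⟫ * ⟪v3, v4⟫ + ⟪v1, v3⟫ * ⟪v2, v4⟫ +
            ⟪v1, v4⟫ * ⟪v2, v3⟫)) := by
  have hη0 : η ≠ 0 := by rw [hη]; exact div_ne_zero (Real.sqrt_pos.2 hdisc).ne' two_ne_zero
  have hμη : μ = lam1 / 2 - η := by rw [hμ, hη]; ring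
  have hη2 : η ^ 2 = lam1 ^ 2 / 4 - ε := by
    rw [hη, div_pow, Real.sq_sqrt hdisc.le]; ring
  have hK11 : K e1 e1 = lam1 • e1 := apply_self_eq_smul_of_sup_eq_top hKcub he1 hlam1 hsplit
  have hcubic : ∀ v1 ∈ D2s lam1 e1 K, ∀ v2 ∈ D2s lam1 e1 K, ∀ v3 ∈ D2s lam1 e1 K,
      K (Lop lam1 e1 K v1 v2) v3 + K (Lop lam1 e1 K v1 v3) v2 + K (Lop lam1 e1 K v2 v3) v1 =
        (lam1 * η / 2) • (⟪v1, v2⟫ • v3 + ⟪v1, v3⟫ • v2 + ⟪v2, v3⟫ • v1) :=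
    fun v1 hv1 v2 hv2 v3 hv3 =>
      sum_K_Lop_cyclic hKsymm hKcub hpar he1 hK11 hμη hη2 hη0 hLD3 hKD2 hv1 hv2 hv3
  have hquartic {v1 v2 v3 : V} (hv1 : v1 ∈ D2s lam1 e1 K) (hv2 : v2 ∈ D2s lam1 e1 K)
      (hv3 : v3 ∈ D2s lam1 e1 K) (v4 : V) :=
    sum_inner_Lop_of_sum_K_Lop (v4 := v4) hKsymm hKcub hLD3 hv1 hv2 hv3
      (hcubic v1 hv1 v2 hv2 v3 hv3)
  refine ⟨fun v hv => ?_, hcubic, fun v1 hv1 v2 hv2 v3 hv3 v4 _ => hquartic hv1 hv2 hv3 v4⟩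
  linear_combination hquartic hv hv hv v / 3

/-- Lemma 4.3: the bilinear map `L` is isotropic, together with its polarized forms. -/
theorem stmt_5 {V : Type*} [NormedAddCommGroup V] [InnerProductSpace ℝ V]
    (n m : ℕ) (hn : finrank ℝ V = n) (hn2 : 2 ≤ n)
    (ε : ℝ) (hε : ε = 1 ∨ ε = -1)
    (K : V →ₗ[ℝ] V →ₗ[ℝ] V)
    (hKsymm : ∀ X Y : V, K X Y = K Y X)
    (hKcub : ∀ X Y Z : V, ⟪K X Y, Z⟫ = ⟪K X Z, Y⟫)
    (hpar : ∀ X Y Z U : V,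
      Rc ε K X Y (K Z U) = K (Rc ε K X Y Z) U + K Z (Rc ε K X Y U))
    (e1 : V) (he1 : ‖e1‖ = 1)
    (lam1 η μ τ : ℝ)
    (hlam1 : lam1 = ⟪K e1 e1, e1⟫) (hlam1pos : 0 < lam1)
    (hmax : ∀ u : V, ‖u‖ = 1 → ⟪K u u, u⟫ ≤ lam1)
    (hdisc : 0 < lam1 ^ 2 - 4 * ε)
    (hη : η = Real.sqrt (lam1 ^ 2 - 4 * ε) / 2)
    (hμ : μ = (lam1 - Real.sqrt (lam1 ^ 2 - 4 * ε)) / 2)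
    (hτ : τ = η * (η + lam1 / 2) / 4)
    (hm2 : 2 ≤ m) (hmn : m ≤ n - 1)
    (hdimD2 : finrank ℝ (D2s lam1 e1 K) = m - 1)
    (hsplit : (ℝ ∙ e1) ⊔ D2s lam1 e1 K ⊔ D3s μ e1 K = ⊤)
    (hLD3 : ∀ v1 ∈ D2s lam1 e1 K, ∀ v2 ∈ D2s lam1 e1 K,
      Lop lam1 e1 K v1 v2 ∈ D3s μ e1 K)
    (hKD2 : ∀ v ∈ D2s lam1 e1 K, ∀ w ∈ D3s μ e1 K, K v w ∈ D2s lam1 e1 K)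
    :
    (∀ v ∈ D2s lam1 e1 K,
        ⟪Lop lam1 e1 K v v, Lop lam1 e1 K v v⟫ = lam1 * η / 2 * ⟪v, v⟫ ^ 2) ∧
    (∀ v1 ∈ D2s lam1 e1 K, ∀ v2 ∈ D2s lam1 e1 K, ∀ v3 ∈ D2s lam1 e1 K,
        K (Lop lam1 e1 K v1 v2) v3 + K (Lop lam1 e1 K v1 v3) v2 +
            K (Lop lam1 e1 K v2 v3) v1 =
          (lam1 * η / 2) • (⟪v1, v2⟫ • v3 + ⟪v1, v3⟫ • v2 + ⟪v2, v3⟫ • v1)) ∧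
    (∀ v1 ∈ D2s lam1 e1 K, ∀ v2 ∈ D2s lam1 e1 K, ∀ v3 ∈ D2s lam1 e1 K,
      ∀ v4 ∈ D2s lam1 e1 K,
        ⟪Lop lam1 e1 K v1 v2, Lop lam1 e1 K v3 v4⟫ +
            ⟪Lop lam1 e1 K v1 v3, Lop lam1 e1 K v2 v4⟫ +
            ⟪Lop lam1 e1 K v1 v4, Lop lam1 e1 K v2 v3⟫ =
          lam1 * η / 2 * (⟪v1, v2⟫ * ⟪v3, v4⟫ + ⟪v1, v3⟫ * ⟪v2, v4⟫ +
            ⟪v1, v4⟫ * ⟪v2, v3⟫)) :=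
  stmt_5_general ε K hKsymm hKcub hpar e1 he1 lam1 η μ hlam1 hdisc hη hμ hsplit hLD3 hKD2

end
end
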